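/- arXiv:1301.4943 — 5 statements merged into one kernel-verified Lean document; each statement's English description precedes it below -/
import Mathlib

section
/- Let $\mathscr{H}$ be a Hilbert space and $\{x_j\}_{j\in\mathbb{N}}$ a sequence of vectors in $\mathscr{H}$. Then $(\sum_{j\in\mathbb{N}} \|x_j\|^2)^{1/2} \le 2 \cdot \sup_{J_0} \|\sum_{j\in J_0} x_j\|$, where the supremum is taken over all finite subsets $J_0 \subseteq \mathbb{N}$. -/
/-!
Split a finite family greedily into two parts `K` and `J \ K`: by the parallelogram law, adding
the next vector to the side which makes `‖∑ K - ∑ (J \ K)‖²` larger increases it by at least the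
vector's squared norm. Hence `∑_J ‖x j‖² ≤ ‖∑_K x - ∑_{J \ K} x‖² ≤ (2 sup_{J₀} ‖∑_{J₀} x‖)²`,
and the bound passes to the infinite sum as a supremum of finite sums.
-/

open scoped ENNReal

theorem sq_norm_add_sq_norm_le_sq_norm_add_or_sub (𝕜 : Type*) {E : Type*} [RCLike 𝕜]
    [NormedAddCommGroup E] [InnerProductSpace 𝕜 E] (u v : E) :
    ‖u‖ ^ 2 + ‖v‖ ^ 2 ≤ ‖u + v‖ ^ 2 ∨ ‖u‖ ^ 2 + ‖v‖ ^ 2 ≤ ‖u - v‖ ^ 2 := by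
  have := parallelogram_law_with_norm 𝕜 u v
  by_contra! h
  linarith [h.1, h.2]

theorem exists_subset_sum_sq_norm_le_sq_norm_sub (𝕜 : Type*) {E ι : Type*} [RCLike 𝕜]
    [NormedAddCommGroup E] [InnerProductSpace 𝕜 E] [DecidableEq ι] (x : ι → E) (J : Finset ι) :
    ∃ K ⊆ J, ∑ j ∈ J, ‖x j‖ ^ 2 ≤ ‖∑ j ∈ K, x j - ∑ j ∈ J \ K, x j‖ ^ 2 := by
  induction J using Finset.induction_on with
  | empty => exact ⟨∅, subset_rfl, by simp⟩
  | insert a J ha ih =>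
    obtain ⟨K, hKJ, hK⟩ := ih
    have haK : a ∉ K := fun h => ha (hKJ h)
    rw [Finset.sum_insert ha]
    rcases sq_norm_add_sq_norm_le_sq_norm_add_or_sub 𝕜 (x a)
        (∑ j ∈ K, x j - ∑ j ∈ J \ K, x j) with hadd | hsub
    · refine ⟨insert a K, Finset.insert_subset_insert a hKJ, ?_⟩
      rw [Finset.insert_sdiff_insert, Finset.sdiff_insert_of_notMem ha, Finset.sum_insert haK,
        add_sub_assoc]
      linarith
    · refine ⟨K, hKJ.trans (Finset.subset_insert a J), ?_⟩
      have hneg : ∑ j ∈ K, x j - (x a + ∑ j ∈ J \ K, x j)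
          = -(x a - (∑ j ∈ K, x j - ∑ j ∈ J \ K, x j)) := by abel
      rw [Finset.insert_sdiff_of_notMem J haK, Finset.sum_insert (by simp [ha]), hneg, norm_neg]
      linarith

theorem norm_sum_sub_sum_sdiff_le_two_mul_iSup {ι E : Type*} [DecidableEq ι]
    [SeminormedAddCommGroup E] (x : ι → E) (J K : Finset ι) :
    (‖∑ j ∈ K, x j - ∑ j ∈ J \ K, x j‖₊ : ℝ≥0∞) ≤ 2 * ⨆ L : Finset ι, (‖∑ j ∈ L, x j‖₊ : ℝ≥0∞) :=
  calc (‖∑ j ∈ K, x j - ∑ j ∈ J \ K, x j‖₊ : ℝ≥0∞)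
      ≤ ‖∑ j ∈ K, x j‖₊ + ‖∑ j ∈ J \ K, x j‖₊ := mod_cast nnnorm_sub_le _ _
    _ ≤ (⨆ L : Finset ι, (‖∑ j ∈ L, x j‖₊ : ℝ≥0∞)) + ⨆ L : Finset ι, (‖∑ j ∈ L, x j‖₊ : ℝ≥0∞) :=
      add_le_add (le_iSup (fun L => (‖∑ j ∈ L, x j‖₊ : ℝ≥0∞)) K)
        (le_iSup (fun L => (‖∑ j ∈ L, x j‖₊ : ℝ≥0∞)) (J \ K))
    _ = 2 * ⨆ L : Finset ι, (‖∑ j ∈ L, x j‖₊ : ℝ≥0∞) := (two_mul _).symm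

theorem sum_sq_nnnorm_le_sq_two_mul_iSup {𝕜 E ι : Type*} [RCLike 𝕜] [NormedAddCommGroup E]
    [InnerProductSpace 𝕜 E] (x : ι → E) (J : Finset ι) :
    ∑ j ∈ J, (‖x j‖₊ : ℝ≥0∞) ^ 2 ≤ (2 * ⨆ L : Finset ι, (‖∑ j ∈ L, x j‖₊ : ℝ≥0∞)) ^ 2 := by
  classical
  obtain ⟨K, -, hsplit⟩ := exists_subset_sum_sq_norm_le_sq_norm_sub 𝕜 x J
  have hsplit' : ∑ j ∈ J, ‖x j‖₊ ^ 2 ≤ ‖∑ j ∈ K, x j - ∑ j ∈ J \ K, x j‖₊ ^ 2 := by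
    rw [← NNReal.coe_le_coe]
    push_cast
    exact hsplit
  calc ∑ j ∈ J, (‖x j‖₊ : ℝ≥0∞) ^ 2
      ≤ (‖∑ j ∈ K, x j - ∑ j ∈ J \ K, x j‖₊ : ℝ≥0∞) ^ 2 := mod_cast hsplit'
    _ ≤ _ := pow_le_pow_left₀ zero_le (norm_sum_sub_sum_sdiff_le_two_mul_iSup x J K) 2

theorem sq_sum_le_two_mul_sup_finset_sum_general {H : Type*} [NormedAddCommGroup H]
    [InnerProductSpace ℝ H] (x : ℕ → H) :
    (∑' j : ℕ, (‖x j‖₊ : ℝ≥0∞) ^ 2) ^ (1 / 2 : ℝ) ≤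
      2 * ⨆ J : Finset ℕ, (‖∑ j ∈ J, x j‖₊ : ℝ≥0∞) := by
  rw [one_div, ENNReal.rpow_inv_le_iff two_pos, ENNReal.rpow_two, ENNReal.tsum_eq_iSup_sum]
  exact iSup_le (sum_sq_nnnorm_le_sq_two_mul_iSup (𝕜 := ℝ) x)

/-- If `H` is a Hilbert space and `x : ℕ → H`, then
`(∑ ‖x j‖²)^{1/2} ≤ 2 ⨆_{J₀ finite} ‖∑_{j ∈ J₀} x j‖`, in `[0,∞]`. -/
theorem sq_sum_le_two_mul_sup_finset_sum {H : Type*} [NormedAddCommGroup H]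
    [InnerProductSpace ℝ H] [CompleteSpace H] (x : ℕ → H) :
    (∑' j : ℕ, (‖x j‖₊ : ℝ≥0∞) ^ 2) ^ (1 / 2 : ℝ) ≤
      2 * ⨆ J : Finset ℕ, (‖∑ j ∈ J, x j‖₊ : ℝ≥0∞) :=
  sq_sum_le_two_mul_sup_finset_sum_general x
end

section
/- Let $(E,\rho,\sigma)$ be a space of homogeneous type with $\sigma$ Borel regular, and let $\mathbb{D}(E)$ be a dyadic cube structure on $E$. Suppose $\{B_Q\}_{Q\in\mathbb{D}(E)} \subseteq [0,\infty]$ satisfies the discrete Carleson condition $C := \sup_{R\in\mathbb{D}(E)} \frac{1}{\sigma(R)} \sum_{Q\in\mathbb{D}(E),\, Q\subseteq R} B_Q < \infty$. Then for every family $\{A_Q\}_{Q\in\mathbb{D}(E)} \subseteq \mathbb{R}$ one has $\sum_{Q\in\mathbb{D}(E)} A_Q B_Q \le C \int_E A^*\, d\sigma$, where $A^*(x) := \sup\{|A_Q| : Q\in\mathbb{D}(E),\, x\in Q\}$ (with $A^*(x):=0$ if $x$ belongs to no cube). -/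
open MeasureTheory
open scoped ENNReal

/-- A dyadic cube structure on a metric space: a countable family of open cubes,
organized in generations, pairwise disjoint within a generation, nested-or-disjoint
across generations, each cube of generation `k` containing a ball of radius `a₀ 2^{-k}`
and contained in a ball of radius `a₁ 2^{-k}` around its center. -/
structure DyadicGrid {X : Type*} [MetricSpace X] (ι : Type*) where
  Q : ι → Set X
  gen : ι → ℤ
  center : ι → X
  a₀ : ℝ
  a₁ : ℝ
  a₀_pos : 0 < a₀
  a₀_le_a₁ : a₀ ≤ a₁
  isOpen_cube : ∀ i, IsOpen (Q i)
  disjoint_same_gen : ∀ i j, gen i = gen j → i ≠ j → Q i ∩ Q j = ∅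
  nested : ∀ i j, gen i ≤ gen j → Q j ⊆ Q i ∨ Q i ∩ Q j = ∅
  ball_subset : ∀ i, Metric.ball (center i) (a₀ * (2 : ℝ) ^ (-gen i)) ⊆ Q i
  subset_ball : ∀ i, Q i ⊆ Metric.ball (center i) (a₁ * (2 : ℝ) ^ (-gen i))

/-- Key geometric lemma: the sum of `B` over any finite family of cubes is controlled by
the measure of the union of the cubes, via decomposition into maximal cubes. -/
lemma dce_key {X ι : Type*} [MetricSpace X] [MeasurableSpace X] [BorelSpace X]
    (σ : Measure X) (D : DyadicGrid (X := X) ι) (B : ι → ℝ≥0∞) (Car : ℝ)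
    (hCarleson : ∀ R : ι, ∑' i : {i : ι // D.Q i ⊆ D.Q R}, B i.1 ≤
        ENNReal.ofReal Car * σ (D.Q R)) (F : Finset ι) :
    ∑ i ∈ F, B i ≤ ENNReal.ofReal Car * σ (⋃ i ∈ F, D.Q i) := by
  classical
  induction F using Finset.strongInduction with
  | _ F ih =>
    rcases F.eq_empty_or_nonempty with rfl | hne
    · simp
    obtain ⟨i₀, hi₀F, hmin⟩ := F.exists_min_image D.gen hne
    set F₂ := F.filter (fun j => ¬ D.Q j ⊆ D.Q i₀) with hF₂
    have hssub : F₂ ⊂ F :=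
      Finset.filter_ssubset.mpr ⟨i₀, hi₀F, by simp⟩
    have h1 : ∑ i ∈ F.filter (fun j => D.Q j ⊆ D.Q i₀), B i ≤
        ENNReal.ofReal Car * σ (D.Q i₀) := by
      refine le_trans ?_ (hCarleson i₀)
      rw [← Finset.sum_subtype_eq_sum_filter]
      exact ENNReal.sum_le_tsum _
    have h2 : ∑ i ∈ F₂, B i ≤ ENNReal.ofReal Car * σ (⋃ i ∈ F₂, D.Q i) := ih F₂ hssub
    have hmeas2 : MeasurableSet (⋃ i ∈ F₂, D.Q i) :=
      MeasurableSet.biUnion F₂.countable_toSet (fun i _ => (D.isOpen_cube i).measurableSet)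
    have hdisj : Disjoint (D.Q i₀) (⋃ i ∈ F₂, D.Q i) := by
      rw [Set.disjoint_iUnion₂_right]
      intro j hj
      have hj' := Finset.mem_filter.mp hj
      rcases D.nested i₀ j (hmin j hj'.1) with h | h
      · exact absurd h hj'.2
      · exact Set.disjoint_iff_inter_eq_empty.mpr h
    have hsub : D.Q i₀ ∪ ⋃ i ∈ F₂, D.Q i ⊆ ⋃ i ∈ F, D.Q i := by
      refine Set.union_subset (Set.subset_biUnion_of_mem hi₀F) ?_
      exact Set.biUnion_mono (fun i hi => (Finset.filter_subset _ F) hi) (fun i _ => le_rfl)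
    calc ∑ i ∈ F, B i
        = ∑ i ∈ F.filter (fun j => D.Q j ⊆ D.Q i₀), B i + ∑ i ∈ F₂, B i :=
          (Finset.sum_filter_add_sum_filter_not F _ B).symm
      _ ≤ ENNReal.ofReal Car * σ (D.Q i₀) + ENNReal.ofReal Car * σ (⋃ i ∈ F₂, D.Q i) :=
          add_le_add h1 h2
      _ = ENNReal.ofReal Car * (σ (D.Q i₀) + σ (⋃ i ∈ F₂, D.Q i)) := (mul_add _ _ _).symm
      _ = ENNReal.ofReal Car * σ (D.Q i₀ ∪ ⋃ i ∈ F₂, D.Q i) := by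
          rw [measure_union hdisj hmeas2]
      _ ≤ ENNReal.ofReal Car * σ (⋃ i ∈ F, D.Q i) :=
          mul_le_mul_right (measure_mono hsub) _

/-- Finite version of the discrete Carleson embedding. -/
lemma dce_finset {X ι : Type*} [MetricSpace X] [MeasurableSpace X] [BorelSpace X]
    (σ : Measure X) (D : DyadicGrid (X := X) ι) (B : ι → ℝ≥0∞) (Car : ℝ)
    (hCarleson : ∀ R : ι, ∑' i : {i : ι // D.Q i ⊆ D.Q R}, B i.1 ≤
        ENNReal.ofReal Car * σ (D.Q R)) :
    ∀ n : ℕ, ∀ F : Finset ι, F.card ≤ n → ∀ c : ι → ℝ, (∀ i ∈ F, 0 ≤ c i) →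
      ∑ i ∈ F, ENNReal.ofReal (c i) * B i ≤
        ENNReal.ofReal Car *
          ∫⁻ x, F.sup (fun i => (D.Q i).indicator (fun _ => ENNReal.ofReal (c i)) x) ∂σ := by
  classical
  intro n
  induction n with
  | zero =>
    intro F hF c _
    rw [Nat.le_zero, Finset.card_eq_zero] at hF
    subst hF
    simp
  | succ n ih =>
    intro F hF c hc
    rcases F.eq_empty_or_nonempty with rfl | hne
    · simp
    obtain ⟨i₀, hi₀F, hmin⟩ := F.exists_min_image c hne
    set m := c i₀ with hm
    have hm0 : 0 ≤ m := hc i₀ hi₀F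
    set F' := F.filter (fun j => m < c j) with hF'
    have hF'sub : F' ⊆ F := Finset.filter_subset _ _
    have hcard : F'.card ≤ n := by
      have hsub : F' ⊆ F.erase i₀ := by
        intro j hj
        have hj' := Finset.mem_filter.mp hj
        refine Finset.mem_erase.mpr ⟨?_, hj'.1⟩
        intro h; subst h; exact lt_irrefl _ hj'.2
      have := Finset.card_le_card hsub
      have hce : (F.erase i₀).card = F.card - 1 := Finset.card_erase_of_mem hi₀F
      omega
    have hIH := ih F' hcard (fun j => c j - m)
      (fun j hj => sub_nonneg.mpr (le_of_lt (Finset.mem_filter.mp hj).2))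
    set U := ⋃ i ∈ (F : Finset ι), D.Q i with hU
    have hUmeas : MeasurableSet U :=
      MeasurableSet.biUnion F.countable_toSet (fun i _ => (D.isOpen_cube i).measurableSet)
    -- split the sum
    have hsplit : ∑ i ∈ F, ENNReal.ofReal (c i) * B i
        = (∑ i ∈ F', ENNReal.ofReal (c i - m) * B i) + ENNReal.ofReal m * ∑ i ∈ F, B i := by
      have heach : ∀ i ∈ F, ENNReal.ofReal (c i) * B i
          = ENNReal.ofReal (c i - m) * B i + ENNReal.ofReal m * B i := by
        intro i hi
        rw [← add_mul, ← ENNReal.ofReal_add (sub_nonneg.mpr (hmin i hi)) hm0,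
          sub_add_cancel]
      rw [Finset.sum_congr rfl heach, Finset.sum_add_distrib, Finset.mul_sum]
      congr 1
      refine (Finset.sum_subset hF'sub ?_).symm
      intro j hj hj'
      have hle : c j ≤ m := by
        by_contra h
        exact hj' (Finset.mem_filter.mpr ⟨hj, lt_of_not_ge h⟩)
      rw [ENNReal.ofReal_eq_zero.mpr (sub_nonpos.mpr hle), zero_mul]
    -- the "bottom layer" estimate
    have hlayer : ENNReal.ofReal m * ∑ i ∈ F, B i ≤
        ENNReal.ofReal Car * ∫⁻ x, U.indicator (fun _ => ENNReal.ofReal m) x ∂σ := by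
      have hkey := dce_key σ D B Car hCarleson F
      calc ENNReal.ofReal m * ∑ i ∈ F, B i
          ≤ ENNReal.ofReal m * (ENNReal.ofReal Car * σ U) := mul_le_mul_right hkey _
        _ = ENNReal.ofReal Car * (ENNReal.ofReal m * σ U) := by ring
        _ = ENNReal.ofReal Car * ∫⁻ x, U.indicator (fun _ => ENNReal.ofReal m) x ∂σ := by
            rw [lintegral_indicator hUmeas, setLIntegral_const]
    -- pointwise bound
    have hpt : ∀ x,
        (F'.sup (fun i => (D.Q i).indicator (fun _ => ENNReal.ofReal (c i - m)) x))
          + U.indicator (fun _ => ENNReal.ofReal m) x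
        ≤ F.sup (fun i => (D.Q i).indicator (fun _ => ENNReal.ofReal (c i)) x) := by
      intro x
      by_cases hx : x ∈ U
      · rw [Set.indicator_of_mem hx]
        obtain ⟨i₁, hi₁, hxi₁⟩ := Set.mem_iUnion₂.mp hx
        have hi₁F : i₁ ∈ F := hi₁
        have hfx : ENNReal.ofReal (c i₁) ≤
            F.sup (fun i => (D.Q i).indicator (fun _ => ENNReal.ofReal (c i)) x) := by
          refine le_trans (le_of_eq ?_) (Finset.le_sup hi₁F)
          rw [Set.indicator_of_mem hxi₁]
        have hmfx : ENNReal.ofReal m ≤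
            F.sup (fun i => (D.Q i).indicator (fun _ => ENNReal.ofReal (c i)) x) :=
          le_trans (ENNReal.ofReal_le_ofReal (hmin i₁ hi₁F)) hfx
        rcases F'.eq_empty_or_nonempty with hFe | hne'
        · rw [hFe]; simpa using hmfx
        · obtain ⟨j, hjmem, hjsup⟩ :=
            F'.exists_mem_eq_sup hne' (fun i => (D.Q i).indicator (fun _ => ENNReal.ofReal (c i - m)) x)
          rw [hjsup]
          by_cases hxj : x ∈ D.Q j
          · rw [Set.indicator_of_mem hxj]
            rw [← ENNReal.ofReal_add (sub_nonneg.mpr (hmin j (hF'sub hjmem))) hm0,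
              sub_add_cancel]
            refine le_trans (le_of_eq ?_) (Finset.le_sup (hF'sub hjmem))
            rw [Set.indicator_of_mem hxj]
          · rw [Set.indicator_of_notMem hxj, zero_add]
            exact hmfx
      · rw [Set.indicator_of_notMem hx, add_zero]
        refine Finset.sup_le fun j hj => ?_
        have hxj : x ∉ D.Q j := fun hxx => hx (Set.mem_biUnion (hF'sub hj) hxx)
        simp [Set.indicator_of_notMem hxj]
    calc ∑ i ∈ F, ENNReal.ofReal (c i) * B i
        = (∑ i ∈ F', ENNReal.ofReal (c i - m) * B i) + ENNReal.ofReal m * ∑ i ∈ F, B i :=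
          hsplit
      _ ≤ ENNReal.ofReal Car *
            (∫⁻ x, F'.sup (fun i => (D.Q i).indicator (fun _ => ENNReal.ofReal (c i - m)) x) ∂σ)
          + ENNReal.ofReal Car * ∫⁻ x, U.indicator (fun _ => ENNReal.ofReal m) x ∂σ :=
          add_le_add hIH hlayer
      _ = ENNReal.ofReal Car *
            ((∫⁻ x, F'.sup (fun i => (D.Q i).indicator (fun _ => ENNReal.ofReal (c i - m)) x) ∂σ)
              + ∫⁻ x, U.indicator (fun _ => ENNReal.ofReal m) x ∂σ) := (mul_add _ _ _).symm
      _ ≤ ENNReal.ofReal Car *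
            ∫⁻ x, (F'.sup (fun i => (D.Q i).indicator (fun _ => ENNReal.ofReal (c i - m)) x)
              + U.indicator (fun _ => ENNReal.ofReal m) x) ∂σ :=
          mul_le_mul_right (le_lintegral_add _ _) _
      _ ≤ ENNReal.ofReal Car *
            ∫⁻ x, F.sup (fun i => (D.Q i).indicator (fun _ => ENNReal.ofReal (c i)) x) ∂σ :=
          mul_le_mul_right (lintegral_mono fun x => hpt x) _

/-- Discrete Carleson embedding: on a space of homogeneous type with dyadic cube
structure whose generations cover the space up to null sets, if `{B_Q}` satisfies the
discrete Carleson condition `∑_{Q ⊆ R} B_Q ≤ Car · σ(R)` for all dyadic cubes `R`, then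
for any reals `{A_Q}` one has `∑_Q A_Q B_Q ≤ Car ∫ A* dσ`, where
`A*(x) = sup {|A_Q| : x ∈ Q}`. -/
theorem discrete_carleson_embedding {X ι : Type*} [MetricSpace X] [MeasurableSpace X]
    [BorelSpace X] [Countable ι] (σ : Measure X) (Cσ : ℝ) (hCσ : 1 ≤ Cσ)
    (hpos : ∀ (x : X) (r : ℝ), 0 < r → 0 < σ (Metric.ball x r))
    (hfin : ∀ (x : X) (r : ℝ), 0 < r → σ (Metric.ball x r) < ⊤)
    (hdoub : ∀ (x : X) (r : ℝ), 0 < r →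
        σ (Metric.ball x (2 * r)) ≤ ENNReal.ofReal Cσ * σ (Metric.ball x r))
    (D : DyadicGrid (X := X) ι)
    (hcover : ∀ k : ℤ, σ (Set.univ \ ⋃ i ∈ {i : ι | D.gen i = k}, D.Q i) = 0)
    (B : ι → ℝ≥0∞) (A : ι → ℝ) (Car : ℝ) (hCar : 0 ≤ Car)
    (hCarleson : ∀ R : ι, ∑' i : {i : ι // D.Q i ⊆ D.Q R}, B i.1 ≤
        ENNReal.ofReal Car * σ (D.Q R)) :
    ∑' i : ι, ENNReal.ofReal (A i) * B i ≤
      ENNReal.ofReal Car *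
        ∫⁻ x, ⨆ (i : ι) (_ : x ∈ D.Q i), ENNReal.ofReal |A i| ∂σ := by
  classical
  rw [ENNReal.tsum_eq_iSup_sum]
  refine iSup_le fun F => ?_
  calc ∑ i ∈ F, ENNReal.ofReal (A i) * B i
      ≤ ∑ i ∈ F, ENNReal.ofReal |A i| * B i :=
        Finset.sum_le_sum fun i _ =>
          mul_le_mul_left (ENNReal.ofReal_le_ofReal (le_abs_self _)) _
    _ ≤ ENNReal.ofReal Car *
          ∫⁻ x, F.sup (fun i => (D.Q i).indicator (fun _ => ENNReal.ofReal |A i|) x) ∂σ :=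
        dce_finset σ D B Car hCarleson F.card F le_rfl (fun i => |A i|)
          (fun i _ => abs_nonneg _)
    _ ≤ ENNReal.ofReal Car *
          ∫⁻ x, ⨆ (i : ι) (_ : x ∈ D.Q i), ENNReal.ofReal |A i| ∂σ := by
        refine mul_le_mul_right (lintegral_mono fun x => ?_) _
        refine Finset.sup_le fun i _ => ?_
        by_cases hx : x ∈ D.Q i
        · rw [Set.indicator_of_mem hx]
          exact le_iSup_of_le i (by simp [hx])
        · simp [Set.indicator_of_notMem hx]
end

section
/- Let $(E,\rho)$ be a quasi-metric space and $\beta$ a real number with $0<\beta\le(\log_2 C_\rho)^{-1}$. Suppose $F_0,F_1\subseteq E$ are nonempty with $\mathrm{dist}_\rho(F_0,F_1)>0$. Then there exists a function $\eta:E\to\mathbb{R}$ with $0\le\eta\le1$ on $E$, $\eta\equiv 0$ on $F_0$, $\eta\equiv 1$ on $F_1$, and $\sup_{x\ne y} \frac{|\eta(x)-\eta(y)|}{\rho(x,y)^\beta} \le C\, \mathrm{dist}_\rho(F_0,F_1)^{-\beta}$ for some finite constant $C>0$ depending only on $\rho$. -/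
/-!
Put `r x y = max (ρ x y) (ρ y x) ^ β`: it is symmetric, comparable to `ρ ^ β`, and
`r x y ≤ 2 * max (r x z) (r z y)` because `Cρ ^ β ≤ 2`. For such an `r`, Frink's chain lemma
bounds `r x₀ xₙ` by four times the total `r`-length of any chain `x₀, …, xₙ`. Hence the infimum
`d x` of the lengths of chains from `F₀` to `x` is `1`-Lipschitz for `r`, vanishes on `F₀` and is
at least `dist(F₀, F₁) ^ β / 4` on `F₁`; truncating `4 d / dist(F₀, F₁) ^ β` at `1` gives `η`.
-/

open Finset

section QuasiTriangle

variable {X : Type*} {ρ : X → X → ℝ} {K : ℝ}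

theorem max_swap_quasi_triangle (hK : 0 ≤ K)
    (htri : ∀ x y z, ρ x y ≤ K * max (ρ x z) (ρ z y)) (x y z : X) :
    max (ρ x y) (ρ y x) ≤ K * max (max (ρ x z) (ρ z x)) (max (ρ z y) (ρ y z)) := by
  refine max_le ((htri x y z).trans ?_) ((htri y x z).trans ?_) <;>
    exact mul_le_mul_of_nonneg_left (max_le (by simp) (by simp)) hK

theorem rpow_quasi_triangle (hρ : ∀ x y, 0 ≤ ρ x y) (hK : 0 ≤ K) {β : ℝ} (hβ : 0 ≤ β)
    (htri : ∀ x y z, ρ x y ≤ K * max (ρ x z) (ρ z y)) (x y z : X) :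
    ρ x y ^ β ≤ K ^ β * max (ρ x z ^ β) (ρ z y ^ β) := by
  rw [← Real.rpow_max (hρ x z) (hρ z y) hβ, ← Real.mul_rpow hK (le_max_of_le_left (hρ x z))]
  exact Real.rpow_le_rpow (hρ x y) (htri x y z) hβ

end QuasiTriangle

section Chain

variable {X : Type*} (r : X → X → ℝ)

noncomputable def chainSum (f : ℕ → X) (n : ℕ) : ℝ :=
  ∑ i ∈ range n, r (f i) (f (i + 1))

/-- The midpoint of the edge `f j`, `f (j + 1)` when the chain is laid out on the real line. -/
noncomputable def chainMid (f : ℕ → X) (j : ℕ) : ℝ :=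
  (chainSum r f j + chainSum r f (j + 1)) / 2

theorem chainSum_succ (f : ℕ → X) (n : ℕ) :
    chainSum r f (n + 1) = chainSum r f n + r (f n) (f (n + 1)) :=
  sum_range_succ _ _

theorem chainMid_succ_sub (f : ℕ → X) (j : ℕ) :
    chainMid r f (j + 1) - chainMid r f j =
      (r (f j) (f (j + 1)) + r (f (j + 1)) (f (j + 2))) / 2 := by
  simp only [chainMid, chainSum_succ]
  ring

variable {r}

theorem chainSum_nonneg (hr : ∀ x y, 0 ≤ r x y) (f : ℕ → X) (n : ℕ) : 0 ≤ chainSum r f n :=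
  sum_nonneg fun _ _ => hr _ _

theorem chainMid_mono (hr : ∀ x y, 0 ≤ r x y) (f : ℕ → X) : Monotone (chainMid r f) :=
  monotone_nat_of_le_succ fun j => by
    linarith [chainMid_succ_sub r f j, hr (f j) (f (j + 1)), hr (f (j + 1)) (f (j + 2))]

variable (hr : ∀ x y, 0 ≤ r x y) (htri : ∀ x y z, r x y ≤ 2 * max (r x z) (r z y))
include hr htri

/-- Split the chain after the last edge whose midpoint lies in the first half of
`[chainMid r f a, chainMid r f (a + n)]`; by induction both parts then have endpoints at
`r`-distance at most `2 * (chainMid r f (a + n) - chainMid r f a)`. -/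
theorem le_four_mul_chainMid_sub (f : ℕ → X) {n : ℕ} (hn : 1 ≤ n) (a : ℕ) :
    r (f a) (f (a + n + 1)) ≤ 4 * (chainMid r f (a + n) - chainMid r f a) := by
  classical
  induction n using Nat.strong_induction_on generalizing a with
  | _ n ih =>
  obtain ⟨k, rfl⟩ : ∃ k, n = k + 1 := ⟨n - 1, by omega⟩
  show r (f a) (f (a + k + 2)) ≤ 4 * (chainMid r f (a + k + 1) - chainMid r f a)
  set m := chainMid r f
  have hm : Monotone m := chainMid_mono hr f
  set D := m (a + k + 1) - m a
  have hD : 0 ≤ D := sub_nonneg.2 (hm (by omega))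
  set P : ℕ → Prop := fun j => m (a + j) ≤ m a + D / 2
  set w := Nat.findGreatest P k
  have hw : P w :=
    Nat.findGreatest_spec (Nat.zero_le k) (by simp only [P, add_zero]; linarith)
  have hwk : w ≤ k := Nat.findGreatest_le k
  have hleft : r (f a) (f (a + w + 1)) ≤ 2 * D := by
    rcases Nat.eq_zero_or_pos w with hw0 | hw0
    · have := chainMid_succ_sub r f a
      have := hm (show a + 1 ≤ a + k + 1 by omega)
      simp only [hw0, add_zero]
      linarith [hr (f (a + 1)) (f (a + 2))]
    · linarith [ih w (by omega) hw0 a]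
  have hright : r (f (a + w + 1)) (f (a + k + 2)) ≤ 2 * D := by
    rcases hwk.eq_or_lt with hwk | hwk
    · have := chainMid_succ_sub r f (a + k)
      have := hm (show a ≤ a + k by omega)
      rw [hwk]
      linarith [hr (f (a + k)) (f (a + k + 1))]
    · have hw1 : ¬ P (w + 1) := Nat.findGreatest_is_greatest (n := k) (by omega) (by omega)
      have := ih (k - w) (by omega) (by omega) (a + w + 1)
      rw [show a + w + 1 + (k - w) = a + k + 1 by omega] at this
      simp only [P, ← add_assoc] at hw1
      linarith
  calc r (f a) (f (a + k + 2))
      ≤ 2 * max (r (f a) (f (a + w + 1))) (r (f (a + w + 1)) (f (a + k + 2))) := htri _ _ _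
    _ ≤ 2 * (2 * D) := by gcongr; exact max_le hleft hright
    _ = 4 * D := by ring

theorem le_four_mul_chainSum (hrefl : ∀ x, r x x = 0) (f : ℕ → X) :
    ∀ n, r (f 0) (f n) ≤ 4 * chainSum r f n
  | 0 => by simp [hrefl, chainSum]
  | 1 => by simp [chainSum]; linarith [hr (f 0) (f 1)]
  | k + 2 => by
    have key := le_four_mul_chainMid_sub hr htri f (n := k + 1) (by omega) 0
    have h0 := chainSum_nonneg hr f 1
    have hk := chainSum_succ r f (k + 1)
    simp only [zero_add, chainMid, chainSum, range_zero, sum_empty] at key h0 hk ⊢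
    linarith [hr (f (k + 1)) (f (k + 2))]

end Chain

section ChainInfDist

variable {X : Type*} (r : X → X → ℝ) (F : Set X)

def chainSums (x : X) : Set ℝ :=
  {s | ∃ n, ∃ f : ℕ → X, f 0 ∈ F ∧ f n = x ∧ chainSum r f n = s}

noncomputable def chainInfDist (x : X) : ℝ :=
  sInf (chainSums r F x)

theorem chainSum_update_succ (f : ℕ → X) (n : ℕ) (x : X) :
    chainSum r (Function.update f (n + 1) x) (n + 1) = chainSum r f n + r (f n) x := by
  rw [chainSum_succ, Function.update_self, Function.update_of_ne (by omega)]
  congr 1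
  exact sum_congr rfl fun i hi => by
    rw [mem_range] at hi
    rw [Function.update_of_ne (by omega), Function.update_of_ne (by omega)]

variable {r F}

theorem chainSums_nonempty (hF : F.Nonempty) (x : X) : (chainSums r F x).Nonempty := by
  obtain ⟨a, ha⟩ := hF
  exact ⟨_, 1, Function.update (fun _ => a) 1 x, by simpa using ha, by simp, rfl⟩

theorem nonneg_of_mem_chainSums (hr : ∀ x y, 0 ≤ r x y) {x : X} {s : ℝ}
    (hs : s ∈ chainSums r F x) : 0 ≤ s := by
  obtain ⟨n, f, -, -, rfl⟩ := hs
  exact chainSum_nonneg hr f n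

theorem chainSums_bddBelow (hr : ∀ x y, 0 ≤ r x y) (x : X) : BddBelow (chainSums r F x) :=
  ⟨0, fun _ => nonneg_of_mem_chainSums hr⟩

theorem chainInfDist_nonneg (hr : ∀ x y, 0 ≤ r x y) (x : X) : 0 ≤ chainInfDist r F x :=
  Real.sInf_nonneg fun _ => nonneg_of_mem_chainSums hr

theorem chainInfDist_of_mem (hr : ∀ x y, 0 ≤ r x y) {x : X} (hx : x ∈ F) :
    chainInfDist r F x = 0 :=
  le_antisymm (csInf_le (chainSums_bddBelow hr x) ⟨0, fun _ => x, hx, rfl, by simp [chainSum]⟩)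
    (chainInfDist_nonneg hr x)

theorem chainInfDist_le_add (hr : ∀ x y, 0 ≤ r x y) (hF : F.Nonempty) (x y : X) :
    chainInfDist r F x ≤ chainInfDist r F y + r y x := by
  rw [← sub_le_iff_le_add]
  refine le_csInf (chainSums_nonempty hF y) ?_
  rintro _ ⟨n, f, hf0, rfl, rfl⟩
  rw [sub_le_iff_le_add, ← chainSum_update_succ]
  exact csInf_le (chainSums_bddBelow hr x)
    ⟨n + 1, _, by rwa [Function.update_of_ne (by omega)], by simp, rfl⟩

theorem abs_chainInfDist_sub_le (hr : ∀ x y, 0 ≤ r x y) (hsymm : ∀ x y, r x y = r y x)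
    (hF : F.Nonempty) (x y : X) : |chainInfDist r F x - chainInfDist r F y| ≤ r x y := by
  rw [abs_sub_le_iff]
  constructor
  · linarith [chainInfDist_le_add hr hF x y, hsymm x y]
  · linarith [chainInfDist_le_add hr hF y x]

variable (hr : ∀ x y, 0 ≤ r x y) (hrefl : ∀ x, r x x = 0)
  (htri : ∀ x y z, r x y ≤ 2 * max (r x z) (r z y))
include hr hrefl htri

theorem div_four_le_chainInfDist (hF : F.Nonempty) {x : X} {c : ℝ} (hc : ∀ a ∈ F, c ≤ r a x) :
    c / 4 ≤ chainInfDist r F x := by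
  refine le_csInf (chainSums_nonempty hF x) ?_
  rintro _ ⟨n, f, hf0, rfl, rfl⟩
  linarith [hc _ hf0, le_four_mul_chainSum hr htri hrefl f n]

theorem exists_urysohn_of_quasi_triangle_two (hsymm : ∀ x y, r x y = r y x)
    {F₀ F₁ : Set X} (h₀ : F₀.Nonempty) {δ : ℝ} (hδ : 0 < δ)
    (hsep : ∀ a ∈ F₀, ∀ b ∈ F₁, δ ≤ r a b) :
    ∃ η : X → ℝ, (∀ x, 0 ≤ η x ∧ η x ≤ 1) ∧ (∀ x ∈ F₀, η x = 0) ∧ (∀ x ∈ F₁, η x = 1) ∧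
      ∀ x y, |η x - η y| ≤ 4 / δ * r x y := by
  set d := chainInfDist r F₀
  refine ⟨fun x => min 1 (4 / δ * d x), fun x => ⟨?_, min_le_left _ _⟩, fun x hx => ?_,
    fun x hx => ?_, fun x y => ?_⟩
  · have := chainInfDist_nonneg (F := F₀) hr x
    exact le_min zero_le_one (by positivity)
  · simp [d, chainInfDist_of_mem hr hx]
  · have := div_four_le_chainInfDist hr hrefl htri h₀ fun a ha => hsep a ha x hx
    refine min_eq_left ?_
    rw [div_mul_eq_mul_div, le_div_iff₀ hδ]
    linarith
  · calc |min 1 (4 / δ * d x) - min 1 (4 / δ * d y)|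
        ≤ max |1 - 1| |4 / δ * d x - 4 / δ * d y| := abs_min_sub_min_le_max _ _ _ _
      _ = 4 / δ * |d x - d y| := by
          rw [sub_self, abs_zero, ← mul_sub, abs_mul, abs_of_pos (by positivity : 0 < 4 / δ)]
          exact max_eq_right (by positivity)
      _ ≤ 4 / δ * r x y := by gcongr; exact abs_chainInfDist_sub_le hr hsymm h₀ x y

end ChainInfDist

theorem quasi_metric_urysohn_holder_general {X : Type*} (ρ : X → X → ℝ) (C₀ Cρ : ℝ)
    (hC₀ : 1 ≤ C₀) (hCρ : 1 ≤ Cρ)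
    (hnonneg : ∀ x y, 0 ≤ ρ x y)
    (hzero : ∀ x y, ρ x y = 0 ↔ x = y)
    (hsym : ∀ x y, ρ y x ≤ C₀ * ρ x y)
    (htri : ∀ x y z, ρ x y ≤ Cρ * max (ρ x z) (ρ z y))
    (β : ℝ) (hβ : 0 < β) (hβ2 : Cρ ^ β ≤ 2)
    (F₀ F₁ : Set X) (h₀ : F₀.Nonempty)
    (hdist : 0 < sInf (Set.image2 ρ F₀ F₁)) :
    ∃ C : ℝ, 0 < C ∧ ∃ η : X → ℝ,
      (∀ x, 0 ≤ η x ∧ η x ≤ 1) ∧ (∀ x ∈ F₀, η x = 0) ∧ (∀ x ∈ F₁, η x = 1) ∧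
      ∀ x y : X, x ≠ y →
        |η x - η y| ≤ C * sInf (Set.image2 ρ F₀ F₁) ^ (-β) * ρ x y ^ β := by
  set δ := sInf (Set.image2 ρ F₀ F₁)
  set σ : X → X → ℝ := fun x y => max (ρ x y) (ρ y x)
  have hσ : ∀ x y, 0 ≤ σ x y := fun x y => le_max_of_le_left (hnonneg x y)
  set r : X → X → ℝ := fun x y => σ x y ^ β
  have hr : ∀ x y, 0 ≤ r x y := fun x y => Real.rpow_nonneg (hσ x y) β
  have hrefl : ∀ x, r x x = 0 := fun x => by simp [r, σ, (hzero x x).2 rfl, hβ.ne']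
  have hsymm : ∀ x y, r x y = r y x := fun x y => by simp only [r, σ, max_comm]
  have htri₂ : ∀ x y z, r x y ≤ 2 * max (r x z) (r z y) := fun x y z =>
    (rpow_quasi_triangle hσ (by linarith) hβ.le (max_swap_quasi_triangle (by linarith) htri)
      x y z).trans (by gcongr; exact le_max_of_le_left (hr x z))
  have hsep : ∀ a ∈ F₀, ∀ b ∈ F₁, δ ^ β ≤ r a b := fun a ha b hb =>
    Real.rpow_le_rpow hdist.le ((csInf_le ⟨0, by rintro _ ⟨u, -, v, -, rfl⟩; exact hnonneg u v⟩
      (Set.mem_image2_of_mem ha hb)).trans (le_max_left _ _)) hβ.le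
  have hr_le : ∀ x y, r x y ≤ C₀ ^ β * ρ x y ^ β := fun x y => by
    rw [← Real.mul_rpow (by linarith) (hnonneg x y)]
    exact Real.rpow_le_rpow (hσ x y)
      (max_le (le_mul_of_one_le_left (hnonneg x y) hC₀) (hsym x y)) hβ.le
  obtain ⟨η, hη01, hη₀, hη₁, hηlip⟩ :=
    exists_urysohn_of_quasi_triangle_two hr hrefl htri₂ hsymm h₀
      (Real.rpow_pos_of_pos hdist β) hsep
  refine ⟨4 * C₀ ^ β, by positivity, η, hη01, hη₀, hη₁, fun x y _ => ?_⟩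
  calc |η x - η y| ≤ 4 / δ ^ β * r x y := hηlip x y
    _ ≤ 4 / δ ^ β * (C₀ ^ β * ρ x y ^ β) := by gcongr; exact hr_le x y
    _ = 4 * C₀ ^ β * δ ^ (-β) * ρ x y ^ β := by rw [Real.rpow_neg hdist.le]; ring

/-- Quantitative Urysohn lemma with Hölder control on a quasi-metric space: if
`0 < β` with `Cρ^β ≤ 2` (i.e. `β ≤ (log₂ Cρ)⁻¹`) and `F₀, F₁` are nonempty sets at
positive distance, then there is `η : X → ℝ`, `0 ≤ η ≤ 1`, `η ≡ 0` on `F₀`, `η ≡ 1` on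
`F₁`, whose `β`-Hölder seminorm is at most `C · dist(F₀,F₁)^{-β}` with `C` depending
only on `ρ`. -/
theorem quasi_metric_urysohn_holder {X : Type*} (ρ : X → X → ℝ) (C₀ Cρ : ℝ)
    (hC₀ : 1 ≤ C₀) (hCρ : 1 ≤ Cρ)
    (hnonneg : ∀ x y, 0 ≤ ρ x y)
    (hzero : ∀ x y, ρ x y = 0 ↔ x = y)
    (hsym : ∀ x y, ρ y x ≤ C₀ * ρ x y)
    (htri : ∀ x y z, ρ x y ≤ Cρ * max (ρ x z) (ρ z y))
    (β : ℝ) (hβ : 0 < β) (hβ2 : Cρ ^ β ≤ 2)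
    (F₀ F₁ : Set X) (h₀ : F₀.Nonempty) (h₁ : F₁.Nonempty)
    (hdist : 0 < sInf (Set.image2 ρ F₀ F₁)) :
    ∃ C : ℝ, 0 < C ∧ ∃ η : X → ℝ,
      (∀ x, 0 ≤ η x ∧ η x ≤ 1) ∧ (∀ x ∈ F₀, η x = 0) ∧ (∀ x ∈ F₁, η x = 1) ∧
      ∀ x y : X, x ≠ y →
        |η x - η y| ≤ C * sInf (Set.image2 ρ F₀ F₁) ^ (-β) * ρ x y ^ β :=
  quasi_metric_urysohn_holder_general ρ C₀ Cρ hC₀ hCρ hnonneg hzero hsym htri β hβ hβ2 F₀ F₁ h₀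
    hdist
end

section
/- Let $F:\mathbb{R}^{n+1}\setminus\{0\}\to\mathbb{R}$ be a continuous function which is even ($F(-x)=F(x)$) and positively homogeneous of degree $-n-1$ ($F(\lambda x)=\lambda^{-n-1}F(x)$ for $\lambda>0$). Then for every $a\in\mathbb{R}^n$ and every $t>0$: $\int_{\mathbb{R}^n} F(y, a\cdot y + t)\, dy = \frac{1}{2t}\int_{S^{n-1}}\int_{-\infty}^{\infty} F(\omega, s)\, ds\, d\omega = \int_{\mathbb{R}^n} F(y, t)\, dy$. In particular, the value of $\int_{\mathbb{R}^n} F(y, a\cdot y + t)\, dy$ is independent of $a$. -/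
/-!
In polar coordinates `y = r • ω`, homogeneity gives
`r ^ (n - 1) * F (r • ω, r * ⟪a, ω⟫ ± t) = r ^ (-2) * F (ω, ⟪a, ω⟫ ± t / r)`, and the substitution
`u = 1 / r` turns the radial integral of the sum of the two signs into `t⁻¹ * ∫ s, F (ω, s)`: the
`+` sign covers `s > ⟪a, ω⟫`, the `-` sign `s < ⟪a, ω⟫`, so the tilt `⟪a, ω⟫` disappears. Evenness
(`y ↦ -y`) shows that the planes at heights `t` and `-t` carry the same integral. Everything is
absolutely convergent because `|F x| ≤ C * ‖x‖ ^ (-n - 1)`.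
-/

open MeasureTheory Set Module
open scoped RealInnerProductSpace

theorem integral_volumeIoiPow {F : Type*} [NormedAddCommGroup F] [NormedSpace ℝ F]
    (m : ℕ) (g : ℝ → F) :
    ∫ r, g r ∂(Measure.volumeIoiPow m) = ∫ r in Ioi (0 : ℝ), r ^ m • g r := by
  simp only [Measure.volumeIoiPow, ENNReal.ofReal]
  rw [integral_withDensity_eq_integral_smul (measurable_subtype_coe.pow_const _).real_toNNReal,
    integral_subtype_comap measurableSet_Ioi fun r : ℝ ↦ (r ^ m).toNNReal • g r]
  refine setIntegral_congr_fun measurableSet_Ioi fun r hr ↦ ?_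
  rw [NNReal.smul_def, Real.coe_toNNReal _ (pow_nonneg hr.out.le _)]

theorem integral_eq_integral_toSphere_integral_Ioi {E F : Type*} [NormedAddCommGroup E]
    [NormedSpace ℝ E] [FiniteDimensional ℝ E] [Nontrivial E] [MeasurableSpace E] [BorelSpace E]
    [NormedAddCommGroup F] [NormedSpace ℝ F] (μ : Measure E) [μ.IsAddHaarMeasure]
    {f : E → F} (hf : Integrable f μ) :
    ∫ x, f x ∂μ =
      ∫ ω : Metric.sphere (0 : E) 1, (∫ r in Ioi (0 : ℝ), r ^ (finrank ℝ E - 1) • f (r • (ω : E)))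
        ∂μ.toSphere := by
  set T := homeomorphUnitSphereProd E
  have hT := μ.measurePreserving_homeomorphUnitSphereProd
  set f' : Metric.sphere (0 : E) 1 × Ioi (0 : ℝ) → F := fun p ↦ f ((p.2 : ℝ) • (p.1 : E))
  have hf'T : f' ∘ T = f ∘ Subtype.val := by
    funext x
    simp [f', T, smul_inv_smul₀ (norm_ne_zero_iff.2 x.2)]
  have hf' : Integrable f' (μ.toSphere.prod (Measure.volumeIoiPow (finrank ℝ E - 1))) := by
    rw [← hT.integrable_comp_emb T.measurableEmbedding, hf'T,
      ← integrableOn_iff_comap_subtypeVal (measurableSet_singleton _).compl]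
    exact hf.integrableOn
  calc ∫ x, f x ∂μ = ∫ x : ({0}ᶜ : Set E), f x ∂μ.comap Subtype.val := by
        rw [integral_subtype_comap (measurableSet_singleton _).compl, restrict_compl_singleton]
    _ = ∫ p, f' p ∂μ.toSphere.prod (Measure.volumeIoiPow (finrank ℝ E - 1)) := by
        rw [← hT.integral_comp T.measurableEmbedding]
        exact congrArg (fun g ↦ ∫ x, g x ∂μ.comap Subtype.val) hf'T.symm
    _ = _ := by
        rw [integral_prod f' hf']
        congr with ω
        exact integral_volumeIoiPow _ fun r ↦ f (r • (ω : E))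

def IsPosHomogeneous {V : Type*} [Zero V] [SMul ℝ V] (F : V → ℝ) (p : ℝ) : Prop :=
  ∀ l : ℝ, 0 < l → ∀ x : V, x ≠ 0 → F (l • x) = l ^ p * F x

theorem IsPosHomogeneous.exists_abs_le_mul_norm_rpow {V : Type*} [NormedAddCommGroup V]
    [NormedSpace ℝ V] [ProperSpace V] {F : V → ℝ} (hcont : ContinuousOn F {x | x ≠ 0}) {p : ℝ}
    (hhom : IsPosHomogeneous F p) :
    ∃ C, 0 ≤ C ∧ ∀ x : V, x ≠ 0 → |F x| ≤ C * ‖x‖ ^ p := by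
  obtain ⟨C, hC⟩ := (isCompact_sphere (0 : V) 1).exists_bound_of_continuousOn
    (hcont.mono fun x hx ↦ ne_zero_of_mem_unit_sphere ⟨x, hx⟩)
  refine ⟨max C 0, le_max_right _ _, fun x hx ↦ ?_⟩
  have hx' : 0 < ‖x‖ := norm_pos_iff.2 hx
  have hunit : ‖x‖⁻¹ • x ∈ Metric.sphere (0 : V) 1 := by
    simp [norm_smul, hx'.ne']
  calc |F x| = ‖x‖ ^ p * |F (‖x‖⁻¹ • x)| := by
        rw [← abs_of_pos (Real.rpow_pos_of_pos hx' p), ← abs_mul,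
          ← hhom _ hx' _ (ne_zero_of_mem_unit_sphere ⟨_, hunit⟩), smul_inv_smul₀ hx'.ne']
    _ ≤ ‖x‖ ^ p * max C 0 := by
        gcongr
        exact (hC _ hunit).trans (le_max_left _ _)
    _ = max C 0 * ‖x‖ ^ p := mul_comm _ _

theorem integrable_comp_of_abs_le_mul_norm_rpow {E V : Type*} [NormedAddCommGroup E]
    [NormedSpace ℝ E] [FiniteDimensional ℝ E] [MeasurableSpace E] [BorelSpace E]
    (μ : Measure E) [μ.IsAddHaarMeasure] [NormedAddCommGroup V] {F : V → ℝ}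
    (hcont : ContinuousOn F {x | x ≠ 0}) {C p : ℝ} (hC : 0 ≤ C) (hp : finrank ℝ E < -p)
    (hF : ∀ x : V, x ≠ 0 → |F x| ≤ C * ‖x‖ ^ p) {g : E → V} (hg : Continuous g) {K : ℝ}
    (hgK : ∀ y, 1 + ‖y‖ ≤ K * ‖g y‖) :
    Integrable (fun y ↦ F (g y)) μ := by
  have hK : 0 < K := by
    have := hgK 0
    by_contra! hK
    nlinarith [norm_nonneg (g 0), norm_nonneg (0 : E)]
  have hgy : ∀ y, 0 < ‖g y‖ := fun y ↦
    pos_of_mul_pos_right ((by positivity : (0 : ℝ) < 1 + ‖y‖).trans_le (hgK y)) hK.le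
  have hp0 : p ≤ 0 := by linarith [(Nat.cast_nonneg (finrank ℝ E) : (0 : ℝ) ≤ _)]
  have hbound : ∀ y, ‖F (g y)‖ ≤ C * K ^ (-p) * (1 + ‖y‖) ^ p := fun y ↦ calc
    ‖F (g y)‖ ≤ C * ‖g y‖ ^ p := hF _ (norm_pos_iff.1 (hgy y))
    _ ≤ C * ((1 + ‖y‖) / K) ^ p := mul_le_mul_of_nonneg_left
        (Real.rpow_le_rpow_of_nonpos (by positivity) ((div_le_iff₀' hK).2 (hgK y)) hp0) hC
    _ = C * K ^ (-p) * (1 + ‖y‖) ^ p := by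
        rw [Real.div_rpow (by positivity) hK.le, Real.rpow_neg hK.le]
        ring
  have hmajor : Integrable (fun y : E ↦ C * K ^ (-p) * (1 + ‖y‖) ^ p) μ := by
    simpa using (integrable_one_add_norm (μ := μ) hp).const_mul (C * K ^ (-p))
  refine hmajor.mono' ?_ (.of_forall hbound)
  exact (hcont.comp_continuous hg fun y ↦ norm_pos_iff.1 (hgy y)).aestronglyMeasurable

theorem one_add_norm_le_two_mul_norm_prod {X Y : Type*} [SeminormedAddGroup X]
    [SeminormedAddGroup Y] {x : X} (hx : ‖x‖ = 1) (s : Y) : 1 + ‖s‖ ≤ 2 * ‖(x, s)‖ := by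
  rw [Prod.norm_def, hx]
  linarith [le_max_left 1 ‖s‖, le_max_right 1 ‖s‖]

theorem one_add_norm_le_mul_norm_prod_inner_add {E : Type*} [NormedAddCommGroup E]
    [InnerProductSpace ℝ E] (a y : E) {b : ℝ} (hb : b ≠ 0) :
    1 + ‖y‖ ≤ 2 * (‖a‖ + 1) / min |b| 1 * ‖(y, ⟪a, y⟫ + b)‖ := by
  set M := ‖(y, ⟪a, y⟫ + b)‖
  have hyM : ‖y‖ ≤ M := le_max_left _ _
  have hbM : |b| ≤ (‖a‖ + 1) * M := by
    have h₁ : |⟪a, y⟫ + b| ≤ M := le_max_right _ _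
    have h₂ : |⟪a, y⟫| ≤ ‖a‖ * ‖y‖ := abs_real_inner_le_norm a y
    have h₃ : |b| ≤ |⟪a, y⟫ + b| + |⟪a, y⟫| := by
      simpa using abs_sub (⟪a, y⟫ + b) ⟪a, y⟫
    nlinarith [norm_nonneg a]
  rw [div_mul_eq_mul_div, le_div_iff₀ (lt_min (abs_pos.2 hb) one_pos)]
  nlinarith [min_le_left |b| 1, min_le_right |b| 1, norm_nonneg y, norm_nonneg a,
    (lt_min (abs_pos.2 hb) one_pos).le]

theorem integral_Ioi_add_comp_neg {E : Type*} [NormedAddCommGroup E] [NormedSpace ℝ E]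
    {f : ℝ → E} (hf : Integrable f) : ∫ u in Ioi (0 : ℝ), (f u + f (-u)) = ∫ u, f u := by
  rw [integral_add hf.integrableOn hf.comp_neg.integrableOn, integral_comp_neg_Ioi, neg_zero,
    add_comm, intervalIntegral.integral_Iic_add_Ioi hf.integrableOn hf.integrableOn]

theorem integral_Ioi_rpow_neg_two_smul_comp_inv {E : Type*} [NormedAddCommGroup E]
    [NormedSpace ℝ E] (g : ℝ → E) :
    ∫ r in Ioi (0 : ℝ), r ^ (-2 : ℝ) • g r⁻¹ = ∫ u in Ioi (0 : ℝ), g u := by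
  rw [← integral_comp_rpow_Ioi g (p := -1) (by norm_num)]
  refine setIntegral_congr_fun measurableSet_Ioi fun r _ ↦ ?_
  norm_num [Real.rpow_neg_one]

theorem integral_apply_inner_sub_eq_of_even {E : Type*} [NormedAddCommGroup E]
    [InnerProductSpace ℝ E] [MeasurableSpace E] [BorelSpace E] (μ : Measure E) [μ.IsNegInvariant]
    {F : E × ℝ → ℝ} (heven : ∀ x, F (-x) = F x) (a : E) (b : ℝ) :
    ∫ y, F (y, ⟪a, y⟫ - b) ∂μ = ∫ y, F (y, ⟪a, y⟫ + b) ∂μ := by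
  rw [← integral_neg_eq_self]
  congr with y
  rw [← heven (y, _), Prod.neg_mk, inner_neg_right, neg_add']

section Homogeneous

variable {E : Type*} [NormedAddCommGroup E] [InnerProductSpace ℝ E] [FiniteDimensional ℝ E]
  {F : E × ℝ → ℝ}

theorem pow_mul_apply_smul_of_isPosHomogeneous [Nontrivial E]
    (hhom : IsPosHomogeneous F (-(finrank ℝ E : ℝ) - 1)) {ω : E} (hω : ω ≠ 0) (c b : ℝ) {r : ℝ}
    (hr : 0 < r) :
    r ^ (finrank ℝ E - 1) * F (r • ω, r * c + b) = r ^ (-2 : ℝ) * F (ω, c + b * r⁻¹) := by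
  have hsmul : (r • ω, r * c + b) = r • (ω, c + b * r⁻¹) := by
    rw [Prod.smul_mk, smul_eq_mul, mul_add, mul_comm b, mul_inv_cancel_left₀ hr.ne']
  rw [hsmul, hhom r hr _ (by simp [hω]), ← mul_assoc, ← Real.rpow_natCast, ← Real.rpow_add hr,
    Nat.cast_sub finrank_pos]
  congr 2
  push_cast
  ring

theorem integral_Ioi_pow_mul_apply_smul_of_isPosHomogeneous [Nontrivial E]
    (hhom : IsPosHomogeneous F (-(finrank ℝ E : ℝ) - 1)) {ω : E} (hω : ω ≠ 0)
    (hint : Integrable fun s ↦ F (ω, s)) (c : ℝ) {t : ℝ} (ht : 0 < t) :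
    ∫ r in Ioi (0 : ℝ), r ^ (finrank ℝ E - 1) * (F (r • ω, r * c + t) + F (r • ω, r * c - t)) =
      t⁻¹ * ∫ s, F (ω, s) := by
  set f : ℝ → ℝ := fun u ↦ F (ω, c + t * u)
  have hf : Integrable f := (hint.comp_add_left c).comp_mul_left' ht.ne'
  calc _ = ∫ r in Ioi (0 : ℝ), r ^ (-2 : ℝ) • (f r⁻¹ + f (-r⁻¹)) := by
        refine setIntegral_congr_fun measurableSet_Ioi fun r hr ↦ ?_
        rw [mul_add, sub_eq_add_neg, pow_mul_apply_smul_of_isPosHomogeneous hhom hω _ _ hr,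
          pow_mul_apply_smul_of_isPosHomogeneous hhom hω _ _ hr, smul_eq_mul, mul_add]
        simp only [f, neg_mul, mul_neg]
    _ = ∫ u, f u := by
        rw [integral_Ioi_rpow_neg_two_smul_comp_inv fun u ↦ f u + f (-u),
          integral_Ioi_add_comp_neg hf]
    _ = t⁻¹ * ∫ s, F (ω, s) := by
        rw [Measure.integral_comp_mul_left (fun u ↦ F (ω, c + u)),
          integral_add_left_eq_self (fun s ↦ F (ω, s)), abs_inv, abs_of_pos ht, smul_eq_mul]

theorem integrable_apply_mk_of_isPosHomogeneous [Nontrivial E]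
    (hcont : ContinuousOn F {x | x ≠ 0})
    (hhom : IsPosHomogeneous F (-(finrank ℝ E : ℝ) - 1)) {ω : E} (hω : ‖ω‖ = 1) :
    Integrable fun s ↦ F (ω, s) := by
  obtain ⟨C, hC, hF⟩ := IsPosHomogeneous.exists_abs_le_mul_norm_rpow hcont hhom
  have hdim : (1 : ℝ) ≤ finrank ℝ E := Nat.one_le_cast.2 finrank_pos
  exact integrable_comp_of_abs_le_mul_norm_rpow volume hcont hC
    (by rw [finrank_self, Nat.cast_one]; linarith) hF (by fun_prop)
    (one_add_norm_le_two_mul_norm_prod hω)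

section Integral

variable [MeasurableSpace E] [BorelSpace E] (μ : Measure E) [μ.IsAddHaarMeasure]

theorem integrable_apply_inner_add_of_isPosHomogeneous (hcont : ContinuousOn F {x | x ≠ 0})
    (hhom : IsPosHomogeneous F (-(finrank ℝ E : ℝ) - 1)) (a : E) {b : ℝ} (hb : b ≠ 0) :
    Integrable (fun y ↦ F (y, ⟪a, y⟫ + b)) μ := by
  obtain ⟨C, hC, hF⟩ := IsPosHomogeneous.exists_abs_le_mul_norm_rpow hcont hhom
  exact integrable_comp_of_abs_le_mul_norm_rpow μ hcont hC (by linarith) hF (by fun_prop)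
    (one_add_norm_le_mul_norm_prod_inner_add a · hb)

theorem integral_apply_inner_add_add_integral_apply_inner_sub [Nontrivial E]
    (hcont : ContinuousOn F {x | x ≠ 0})
    (hhom : IsPosHomogeneous F (-(finrank ℝ E : ℝ) - 1)) (a : E) {t : ℝ} (ht : 0 < t) :
    ∫ y, F (y, ⟪a, y⟫ + t) ∂μ + ∫ y, F (y, ⟪a, y⟫ - t) ∂μ =
      t⁻¹ * ∫ ω : Metric.sphere (0 : E) 1, (∫ s, F (ω, s)) ∂μ.toSphere := by
  have hplus := integrable_apply_inner_add_of_isPosHomogeneous μ hcont hhom a ht.ne'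
  have hminus : Integrable (fun y ↦ F (y, ⟪a, y⟫ - t)) μ := by
    simpa [sub_eq_add_neg] using
      integrable_apply_inner_add_of_isPosHomogeneous μ hcont hhom a (neg_ne_zero.2 ht.ne')
  rw [← integral_add hplus hminus, integral_eq_integral_toSphere_integral_Ioi μ
    (f := fun y ↦ F (y, ⟪a, y⟫ + t) + F (y, ⟪a, y⟫ - t)) (hplus.add hminus), ← integral_const_mul]
  congr with ω
  simp only [smul_eq_mul, real_inner_smul_right]
  exact integral_Ioi_pow_mul_apply_smul_of_isPosHomogeneous hhom (ne_zero_of_mem_unit_sphere ω)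
    (integrable_apply_mk_of_isPosHomogeneous hcont hhom (by simp)) _ ht

theorem integral_apply_inner_add_of_isPosHomogeneous_of_even [Nontrivial E]
    (hcont : ContinuousOn F {x | x ≠ 0})
    (hhom : IsPosHomogeneous F (-(finrank ℝ E : ℝ) - 1)) (heven : ∀ x, F (-x) = F x)
    (a : E) {t : ℝ} (ht : 0 < t) :
    ∫ y, F (y, ⟪a, y⟫ + t) ∂μ =
      1 / (2 * t) * ∫ ω : Metric.sphere (0 : E) 1, (∫ s, F (ω, s)) ∂μ.toSphere := by
  have hsum := integral_apply_inner_add_add_integral_apply_inner_sub μ hcont hhom a ht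
  rw [integral_apply_inner_sub_eq_of_even μ heven] at hsum
  calc _ = (∫ y, F (y, ⟪a, y⟫ + t) ∂μ + ∫ y, F (y, ⟪a, y⟫ + t) ∂μ) / 2 := by ring
    _ = _ := by rw [hsum]; ring

end Integral

end Homogeneous

/-- If `F : ℝ^{n+1} \ {0} → ℝ` is continuous, even, and positively homogeneous of degree
`-n-1`, then for every `a ∈ ℝⁿ` and `t > 0`:
`∫_{ℝⁿ} F(y, a·y + t) dy = (1/(2t)) ∫_{S^{n-1}} ∫_ℝ F(ω,s) ds dω = ∫_{ℝⁿ} F(y,t) dy`;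
in particular the left-hand side is independent of `a`. -/
theorem homogeneous_even_tilt_invariance (n : ℕ) (hn : 1 ≤ n)
    (F : EuclideanSpace ℝ (Fin n) × ℝ → ℝ)
    (hcont : ContinuousOn F {x | x ≠ 0})
    (heven : ∀ x, F (-x) = F x)
    (hhom : ∀ l : ℝ, 0 < l → ∀ x : EuclideanSpace ℝ (Fin n) × ℝ, x ≠ 0 →
        F (l • x) = l ^ (-(n : ℝ) - 1) * F x)
    (a : EuclideanSpace ℝ (Fin n)) (t : ℝ) (ht : 0 < t) :
    (∫ y : EuclideanSpace ℝ (Fin n), F (y, ⟪a, y⟫ + t)) =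
        (1 / (2 * t)) *
          ∫ ω : Metric.sphere (0 : EuclideanSpace ℝ (Fin n)) 1, (∫ s : ℝ, F (↑ω, s))
            ∂((volume : Measure (EuclideanSpace ℝ (Fin n))).toSphere) ∧
      (∫ y : EuclideanSpace ℝ (Fin n), F (y, ⟪a, y⟫ + t)) =
        ∫ y : EuclideanSpace ℝ (Fin n), F (y, t) := by
  have : Nontrivial (EuclideanSpace ℝ (Fin n)) :=
    Module.nontrivial_of_finrank_pos (by rwa [finrank_euclideanSpace_fin])
  have hhom' : IsPosHomogeneous F (-(finrank ℝ (EuclideanSpace ℝ (Fin n)) : ℝ) - 1) := by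
    rwa [finrank_euclideanSpace_fin]
  have key := fun a ↦
    integral_apply_inner_add_of_isPosHomogeneous_of_even volume hcont hhom' heven a ht
  refine ⟨key a, ?_⟩
  simpa using (key a).trans (key 0).symm
end

section
/- Let $\phi\in C_c^\infty(\mathbb{R}^n)$ with $\hat\phi(0)=1$ (Schwartz decay of $\hat\phi$). Then there exists $C>0$ depending only on $\phi$ such that for all $\lambda\ge1$, all $\tau>0$, all $\zeta\in\mathbb{R}^n$, and all $w\in\mathbb{R}^n$ with $|w|\le1$: $\frac{|1 - e^{i\tau\langle\zeta,w\rangle} + i\tau\langle\zeta,w\rangle\, \hat\phi(\lambda^{-1}\tau\zeta)|}{\tau|\zeta|} \le C \min\Big\{\tau|\zeta|,\ \frac{\lambda}{\tau|\zeta|}\Big\}$, and consequently $\int_0^\infty \frac{|1 - e^{i\tau\langle\zeta,w\rangle} + i\tau\langle\zeta,w\rangle\, \hat\phi(\lambda^{-1}\tau\zeta)|^2}{\tau^2|\zeta|^2}\, \frac{d\tau}{\tau} \le C'\lambda$ for some $C'$ depending only on $\phi$. -/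
open MeasureTheory Complex
open scoped ENNReal RealInnerProductSpace FourierTransform

/-!
Write `t = τ|ζ|` and `m` for the numerator. Since `|τ⟨ζ,w⟩| ≤ t`, the Taylor bound
`|e^{is} - 1 - is| ≤ 2s²` together with the Lipschitz bound `|φ̂(ξ) - 1| ≤ L|ξ|` gives
`|m| ≤ (2 + L) t²`, while `|1 - e^{is}| ≤ 2` and the decay `|ξ| |φ̂(ξ)| ≤ M` at `ξ = λ⁻¹τζ`
give `|m| ≤ (2 + M) λ`. Hence `|m| / t ≤ C min(t, λ/t)`, and integrating
`min(t, λ/t)² dτ/τ` over the two ranges separated by `t = √λ` gives exactly `λ`.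
-/

theorem norm_exp_I_mul_ofReal_sub_one_sub_le (s : ℝ) :
    ‖exp (I * s) - 1 - I * s‖ ≤ 2 * s ^ 2 := by
  have hz : ‖I * (s : ℂ)‖ = |s| := by simp
  rcases le_or_gt |s| 1 with hs | hs
  · calc ‖exp (I * s) - 1 - I * s‖ ≤ ‖I * (s : ℂ)‖ ^ 2 := norm_exp_sub_one_sub_id_le (hz ▸ hs)
      _ = s ^ 2 := by rw [hz, sq_abs]
      _ ≤ 2 * s ^ 2 := by nlinarith [sq_nonneg s]
  · calc ‖exp (I * s) - 1 - I * s‖ ≤ ‖exp (I * s) - 1‖ + ‖I * (s : ℂ)‖ := norm_sub_le _ _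
      _ ≤ |s| + |s| := add_le_add Real.norm_exp_I_mul_ofReal_sub_one_le hz.le
      _ ≤ 2 * s ^ 2 := by nlinarith [sq_abs s]

theorem norm_one_sub_exp_add_mul_le_sq (s : ℝ) (a : ℂ) :
    ‖1 - exp (I * s) + I * s * a‖ ≤ 2 * s ^ 2 + |s| * ‖a - 1‖ :=
  calc ‖1 - exp (I * s) + I * s * a‖ = ‖-(exp (I * s) - 1 - I * s) + I * s * (a - 1)‖ := by
        congr 1; ring
    _ ≤ ‖exp (I * s) - 1 - I * s‖ + ‖I * s * (a - 1)‖ := by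
        rw [← norm_neg (exp (I * s) - 1 - I * s)]
        exact norm_add_le _ _
    _ ≤ 2 * s ^ 2 + |s| * ‖a - 1‖ := by
        gcongr
        · exact norm_exp_I_mul_ofReal_sub_one_sub_le s
        · simp

theorem norm_one_sub_exp_add_mul_le (s : ℝ) (a : ℂ) :
    ‖1 - exp (I * s) + I * s * a‖ ≤ 2 + |s| * ‖a‖ :=
  calc ‖1 - exp (I * s) + I * s * a‖ ≤ ‖1 - exp (I * s)‖ + ‖I * s * a‖ := norm_add_le _ _
    _ ≤ (1 + 1) + |s| * ‖a‖ := by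
        gcongr
        · exact (norm_sub_le _ _).trans (by simp [norm_exp_I_mul_ofReal])
        · simp
    _ = 2 + |s| * ‖a‖ := by norm_num

theorem div_le_mul_min_of_le_mul_min_sq {a t l C : ℝ} (ht : 0 ≤ t)
    (h : a ≤ C * min (t ^ 2) l) : a / t ≤ C * min t (l / t) := by
  rcases ht.eq_or_lt with rfl | ht
  · simp
  rw [div_le_iff₀ ht, mul_assoc, min_mul_of_nonneg _ _ ht.le, div_mul_cancel₀ _ ht.ne', ← sq]
  exact h

theorem SchwartzMap.norm_sub_le_seminorm_mul {E F : Type*} [NormedAddCommGroup E]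
    [NormedSpace ℝ E] [NormedAddCommGroup F] [NormedSpace ℝ F] (f : SchwartzMap E F) (x y : E) :
    ‖f y - f x‖ ≤ SchwartzMap.seminorm ℝ 0 1 f * ‖y - x‖ :=
  convex_univ.norm_image_sub_le_of_norm_fderiv_le (fun _ _ ↦ f.differentiableAt)
    (fun z _ ↦ by simpa using f.norm_iteratedFDeriv_le_seminorm ℝ 1 z) trivial trivial

section Symbol

variable {E : Type*} [NormedAddCommGroup E] [InnerProductSpace ℝ E]

theorem abs_mul_inner_le_mul_norm {τ : ℝ} (hτ : 0 ≤ τ) (ζ : E) {w : E} (hw : ‖w‖ ≤ 1) :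
    |τ * ⟪ζ, w⟫| ≤ τ * ‖ζ‖ := by
  rw [abs_mul, abs_of_nonneg hτ]
  gcongr
  exact (abs_real_inner_le_norm ζ w).trans (mul_le_of_le_one_right (norm_nonneg ζ) hw)

theorem norm_inv_mul_smul {l τ : ℝ} (hl : 0 ≤ l) (hτ : 0 ≤ τ) (ζ : E) :
    ‖(l⁻¹ * τ) • ζ‖ = τ * ‖ζ‖ / l := by
  rw [norm_smul, Real.norm_of_nonneg (by positivity)]
  ring

noncomputable def multiplierSymbol (F : E → ℂ) (l τ : ℝ) (ζ w : E) : ℂ :=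
  1 - exp (I * (τ * ⟪ζ, w⟫ : ℝ)) + I * (τ * ⟪ζ, w⟫ : ℝ) * F ((l⁻¹ * τ) • ζ)

variable {F : E → ℂ} {l τ : ℝ} {w : E}

theorem norm_multiplierSymbol_le_sq {L : ℝ} (hL : 0 ≤ L) (hF : ∀ ξ, ‖F ξ - 1‖ ≤ L * ‖ξ‖)
    (hl : 1 ≤ l) (hτ : 0 ≤ τ) (ζ : E) (hw : ‖w‖ ≤ 1) :
    ‖multiplierSymbol F l τ ζ w‖ ≤ (2 + L) * (τ * ‖ζ‖) ^ 2 := by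
  set t := τ * ‖ζ‖
  have ht : 0 ≤ t := by positivity
  have hs : |τ * ⟪ζ, w⟫| ≤ t := abs_mul_inner_le_mul_norm hτ ζ hw
  have hs2 : (τ * ⟪ζ, w⟫) ^ 2 ≤ t ^ 2 := sq_le_sq' (abs_le.mp hs).1 (abs_le.mp hs).2
  calc ‖multiplierSymbol F l τ ζ w‖
      ≤ 2 * (τ * ⟪ζ, w⟫) ^ 2 + |τ * ⟪ζ, w⟫| * ‖F ((l⁻¹ * τ) • ζ) - 1‖ :=
        norm_one_sub_exp_add_mul_le_sq _ _
    _ ≤ 2 * t ^ 2 + t * (L * (t / l)) := by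
        gcongr
        rw [← norm_inv_mul_smul (by linarith) hτ ζ]
        exact hF _
    _ ≤ 2 * t ^ 2 + t * (L * t) := by gcongr; exact div_le_self ht hl
    _ = (2 + L) * t ^ 2 := by ring

theorem norm_multiplierSymbol_le {M : ℝ} (hF : ∀ ξ, ‖ξ‖ * ‖F ξ‖ ≤ M) (hl : 1 ≤ l)
    (hτ : 0 ≤ τ) (ζ : E) (hw : ‖w‖ ≤ 1) :
    ‖multiplierSymbol F l τ ζ w‖ ≤ (2 + M) * l := by
  set ξ := (l⁻¹ * τ) • ζ
  have hl₀ : 0 ≤ l := by linarith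
  have hξ : τ * ‖ζ‖ = l * ‖ξ‖ := by
    rw [norm_inv_mul_smul hl₀ hτ ζ]
    field_simp
  calc ‖multiplierSymbol F l τ ζ w‖ ≤ 2 + |τ * ⟪ζ, w⟫| * ‖F ξ‖ :=
        norm_one_sub_exp_add_mul_le _ _
    _ ≤ 2 + τ * ‖ζ‖ * ‖F ξ‖ := by gcongr; exact abs_mul_inner_le_mul_norm hτ ζ hw
    _ = 2 + l * (‖ξ‖ * ‖F ξ‖) := by rw [hξ, mul_assoc]
    _ ≤ 2 + l * M := by gcongr; exact hF ξ
    _ ≤ (2 + M) * l := by linarith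

theorem norm_multiplierSymbol_div_le_mul_min {L M : ℝ} (hL : 0 ≤ L)
    (hF₀ : ∀ ξ, ‖F ξ - 1‖ ≤ L * ‖ξ‖) (hF₁ : ∀ ξ, ‖ξ‖ * ‖F ξ‖ ≤ M) (hl : 1 ≤ l) (hτ : 0 ≤ τ)
    (ζ : E) (hw : ‖w‖ ≤ 1) :
    ‖multiplierSymbol F l τ ζ w‖ / (τ * ‖ζ‖) ≤
      max (2 + L) (2 + M) * min (τ * ‖ζ‖) (l / (τ * ‖ζ‖)) := by
  refine div_le_mul_min_of_le_mul_min_sq (by positivity) ?_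
  calc ‖multiplierSymbol F l τ ζ w‖ ≤ min ((2 + L) * (τ * ‖ζ‖) ^ 2) ((2 + M) * l) :=
        le_min (norm_multiplierSymbol_le_sq hL hF₀ hl hτ ζ hw)
          (norm_multiplierSymbol_le hF₁ hl hτ ζ hw)
    _ ≤ max (2 + L) (2 + M) * min ((τ * ‖ζ‖) ^ 2) l := by
        rw [mul_min_of_nonneg _ _ ((by linarith : (0 : ℝ) ≤ 2 + L).trans (le_max_left _ _))]
        exact min_le_min (mul_le_mul_of_nonneg_right (le_max_left _ _) (sq_nonneg _))
          (mul_le_mul_of_nonneg_right (le_max_right _ _) (by linarith))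

end Symbol

theorem setLIntegral_Ioc_ofReal_const_mul {c a : ℝ} (hc : 0 ≤ c) (ha : 0 ≤ a) :
    ∫⁻ τ in Set.Ioc 0 a, ENNReal.ofReal (c * τ) = ENNReal.ofReal (c * a ^ 2 / 2) := by
  rw [← ofReal_integral_eq_lintegral_ofReal
    (Continuous.integrableOn_Ioc (by fun_prop : Continuous fun τ : ℝ ↦ c * τ))]
  · rw [← intervalIntegral.integral_of_le ha, intervalIntegral.integral_const_mul, integral_id]
    congr 1; ring
  · filter_upwards [ae_restrict_mem measurableSet_Ioc] with τ hτ
    exact mul_nonneg hc hτ.1.le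

theorem setLIntegral_Ioi_ofReal_const_mul_rpow_neg_three {c a : ℝ} (hc : 0 ≤ c) (ha : 0 < a) :
    ∫⁻ τ in Set.Ioi a, ENNReal.ofReal (c * τ ^ (-3 : ℝ)) = ENNReal.ofReal (c / (2 * a ^ 2)) := by
  rw [← ofReal_integral_eq_lintegral_ofReal
    ((integrableOn_Ioi_rpow_of_lt (by norm_num) ha).const_mul c)]
  · rw [integral_const_mul, integral_Ioi_rpow_of_lt (by norm_num) ha,
      show (-3 + 1 : ℝ) = -(2 : ℕ) by norm_num, Real.rpow_neg ha.le, Real.rpow_natCast]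
    congr 1
    field_simp
    ring
  · filter_upwards [ae_restrict_mem measurableSet_Ioi] with τ hτ
    exact mul_nonneg hc (Real.rpow_nonneg (ha.trans hτ).le _)

theorem setLIntegral_Ioi_ofReal_min_sq_mul_inv_le {r l : ℝ} (hr : 0 ≤ r) (hl : 0 < l) :
    ∫⁻ τ in Set.Ioi 0, ENNReal.ofReal (min (τ * r) (l / (τ * r)) ^ 2 * τ⁻¹) ≤
      ENNReal.ofReal l := by
  rcases hr.eq_or_lt with rfl | hr
  · simp
  set τ₀ := Real.sqrt l / r
  have hτ₀ : 0 < τ₀ := by positivity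
  have hτ₀sq : τ₀ ^ 2 = l / r ^ 2 := by rw [div_pow, Real.sq_sqrt hl.le]
  have hmin : ∀ τ, 0 < τ → 0 ≤ min (τ * r) (l / (τ * r)) := fun τ hτ ↦ by positivity
  have hlow : ∀ τ ∈ Set.Ioc 0 τ₀, ENNReal.ofReal (min (τ * r) (l / (τ * r)) ^ 2 * τ⁻¹) ≤
      ENNReal.ofReal (r ^ 2 * τ) := fun τ hτ ↦ by
    refine ENNReal.ofReal_le_ofReal ?_
    calc min (τ * r) (l / (τ * r)) ^ 2 * τ⁻¹ ≤ (τ * r) ^ 2 * τ⁻¹ :=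
          mul_le_mul_of_nonneg_right (pow_le_pow_left₀ (hmin τ hτ.1) (min_le_left _ _) 2)
            (inv_nonneg.2 hτ.1.le)
      _ = r ^ 2 * τ := by field_simp [hτ.1.ne']
  have hhigh : ∀ τ ∈ Set.Ioi τ₀, ENNReal.ofReal (min (τ * r) (l / (τ * r)) ^ 2 * τ⁻¹) ≤
      ENNReal.ofReal (l ^ 2 / r ^ 2 * τ ^ (-3 : ℝ)) := fun τ hτ ↦ by
    have hτ : 0 < τ := hτ₀.trans hτ
    refine ENNReal.ofReal_le_ofReal ?_
    calc min (τ * r) (l / (τ * r)) ^ 2 * τ⁻¹ ≤ (l / (τ * r)) ^ 2 * τ⁻¹ :=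
          mul_le_mul_of_nonneg_right (pow_le_pow_left₀ (hmin τ hτ) (min_le_right _ _) 2)
            (inv_nonneg.2 hτ.le)
      _ = l ^ 2 / r ^ 2 * τ ^ (-3 : ℝ) := by
          rw [show (-3 : ℝ) = -(3 : ℕ) by norm_num, Real.rpow_neg hτ.le, Real.rpow_natCast]
          field_simp
  rw [← Set.Ioc_union_Ioi_eq_Ioi hτ₀.le, lintegral_union measurableSet_Ioi
    Set.Ioc_disjoint_Ioi_same]
  calc _ ≤ (∫⁻ τ in Set.Ioc 0 τ₀, ENNReal.ofReal (r ^ 2 * τ)) +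
        ∫⁻ τ in Set.Ioi τ₀, ENNReal.ofReal (l ^ 2 / r ^ 2 * τ ^ (-3 : ℝ)) :=
        add_le_add (setLIntegral_mono' measurableSet_Ioc hlow)
          (setLIntegral_mono' measurableSet_Ioi hhigh)
    _ = ENNReal.ofReal (l / 2) + ENNReal.ofReal (l / 2) := by
        rw [setLIntegral_Ioc_ofReal_const_mul (by positivity) hτ₀.le,
          setLIntegral_Ioi_ofReal_const_mul_rpow_neg_three (by positivity) hτ₀, hτ₀sq]
        congr 2 <;> field_simp
    _ = ENNReal.ofReal l := by rw [← ENNReal.ofReal_add (by positivity) (by positivity), add_halves]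

theorem setLIntegral_Ioi_sq_div_le_of_div_le_mul_min {X : Type*} [NormedAddCommGroup X]
    {g : ℝ → X} {C r l : ℝ} (hr : 0 ≤ r) (hl : 0 < l)
    (hg : ∀ τ, 0 < τ → ‖g τ‖ / (τ * r) ≤ C * min (τ * r) (l / (τ * r))) :
    ∫⁻ τ in Set.Ioi 0, ENNReal.ofReal (‖g τ‖ ^ 2 / (τ ^ 2 * r ^ 2) * τ⁻¹) ≤
      ENNReal.ofReal (C ^ 2 * l) := by
  have hpt : ∀ τ ∈ Set.Ioi (0 : ℝ), ENNReal.ofReal (‖g τ‖ ^ 2 / (τ ^ 2 * r ^ 2) * τ⁻¹) ≤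
      ENNReal.ofReal (C ^ 2) * ENNReal.ofReal (min (τ * r) (l / (τ * r)) ^ 2 * τ⁻¹) := by
    intro τ (hτ : 0 < τ)
    rw [← ENNReal.ofReal_mul (sq_nonneg C)]
    refine ENNReal.ofReal_le_ofReal ?_
    calc ‖g τ‖ ^ 2 / (τ ^ 2 * r ^ 2) * τ⁻¹ = (‖g τ‖ / (τ * r)) ^ 2 * τ⁻¹ := by
          rw [div_pow, mul_pow]
      _ ≤ (C * min (τ * r) (l / (τ * r))) ^ 2 * τ⁻¹ :=
          mul_le_mul_of_nonneg_right (pow_le_pow_left₀ (by positivity) (hg τ hτ) 2)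
            (inv_nonneg.2 hτ.le)
      _ = C ^ 2 * (min (τ * r) (l / (τ * r)) ^ 2 * τ⁻¹) := by ring
  calc _ ≤ ∫⁻ τ in Set.Ioi 0,
        ENNReal.ofReal (C ^ 2) * ENNReal.ofReal (min (τ * r) (l / (τ * r)) ^ 2 * τ⁻¹) :=
        setLIntegral_mono' measurableSet_Ioi hpt
    _ = ENNReal.ofReal (C ^ 2) *
        ∫⁻ τ in Set.Ioi 0, ENNReal.ofReal (min (τ * r) (l / (τ * r)) ^ 2 * τ⁻¹) :=
        lintegral_const_mul' _ _ ENNReal.ofReal_ne_top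
    _ ≤ ENNReal.ofReal (C ^ 2) * ENNReal.ofReal l := by
        gcongr
        exact setLIntegral_Ioi_ofReal_min_sq_mul_inv_le hr hl
    _ = ENNReal.ofReal (C ^ 2 * l) := (ENNReal.ofReal_mul (sq_nonneg C)).symm

/-- Fourier multiplier estimate: if `φ ∈ C_c^∞(ℝⁿ)` with `φ̂(0) = 1`, then there are
constants `C, C' > 0` depending only on `φ` such that for all `λ ≥ 1`, `|w| ≤ 1`:
`|1 - e^{iτ⟨ζ,w⟩} + iτ⟨ζ,w⟩ φ̂(λ⁻¹τζ)| / (τ|ζ|) ≤ C min{τ|ζ|, λ/(τ|ζ|)}` for all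
`τ > 0, ζ`, and consequently the square integral in `dτ/τ` is at most `C' λ`. -/
theorem fourier_multiplier_min_bound (n : ℕ) (φ : EuclideanSpace ℝ (Fin n) → ℝ)
    (hφ : ContDiff ℝ (⊤ : ℕ∞) φ) (hφc : HasCompactSupport φ)
    (hφ0 : 𝓕 (fun x => (φ x : ℂ)) 0 = 1) :
    ∃ C C' : ℝ, 0 < C ∧ 0 < C' ∧ ∀ l : ℝ, 1 ≤ l →
      ∀ w : EuclideanSpace ℝ (Fin n), ‖w‖ ≤ 1 →
        (∀ τ : ℝ, 0 < τ → ∀ ζ : EuclideanSpace ℝ (Fin n),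
          ‖1 - Complex.exp (Complex.I * Complex.ofReal (τ * ⟪ζ, w⟫)) +
              Complex.I * Complex.ofReal (τ * ⟪ζ, w⟫) *
                𝓕 (fun x => (φ x : ℂ)) ((l⁻¹ * τ) • ζ)‖ / (τ * ‖ζ‖) ≤
            C * min (τ * ‖ζ‖) (l / (τ * ‖ζ‖))) ∧
        ∀ ζ : EuclideanSpace ℝ (Fin n),
          (∫⁻ τ in Set.Ioi (0 : ℝ),
            ENNReal.ofReal
              (‖1 - Complex.exp (Complex.I * Complex.ofReal (τ * ⟪ζ, w⟫)) +
                  Complex.I * Complex.ofReal (τ * ⟪ζ, w⟫) *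
                    𝓕 (fun x => (φ x : ℂ)) ((l⁻¹ * τ) • ζ)‖ ^ 2 /
                (τ ^ 2 * ‖ζ‖ ^ 2) * τ⁻¹)) ≤
          ENNReal.ofReal (C' * l) := by
  set f := (hφc.comp_left ofReal_zero).toSchwartzMap (ofRealCLM.contDiff.comp hφ)
  have hf : 𝓕 (fun x => (φ x : ℂ)) = 𝓕 f := rfl
  set L := SchwartzMap.seminorm ℝ 0 1 (𝓕 f)
  set M := SchwartzMap.seminorm ℝ 1 0 (𝓕 f)
  have hL : 0 ≤ L := apply_nonneg _ _
  have hLip : ∀ ξ, ‖𝓕 (fun x => (φ x : ℂ)) ξ - 1‖ ≤ L * ‖ξ‖ := fun ξ ↦ by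
    simpa [← hφ0, hf] using SchwartzMap.norm_sub_le_seminorm_mul (𝓕 f) 0 ξ
  have hdecay : ∀ ξ, ‖ξ‖ * ‖𝓕 (fun x => (φ x : ℂ)) ξ‖ ≤ M := fun ξ ↦ by
    simpa [hf] using SchwartzMap.norm_pow_mul_le_seminorm ℝ (𝓕 f) 1 ξ
  have hpt := fun l (hl : 1 ≤ l) w (hw : ‖w‖ ≤ 1) τ (hτ : 0 < τ) ζ ↦
    norm_multiplierSymbol_div_le_mul_min hL hLip hdecay hl hτ.le ζ hw
  refine ⟨max (2 + L) (2 + M), max (2 + L) (2 + M) ^ 2, lt_max_of_lt_left (by linarith),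
    by positivity, fun l hl w hw ↦ ⟨hpt l hl w hw, fun ζ ↦ ?_⟩⟩
  exact setLIntegral_Ioi_sq_div_le_of_div_le_mul_min (norm_nonneg ζ) (by linarith)
    fun τ hτ ↦ hpt l hl w hw τ hτ ζ
end
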